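/- Let L, T > 0, Ω = (-L/2, L/2) × (0, T), v > 0 and Λ > 1. Let N_x ≥ 2 and N_z ≥ 2 be integers, set δx = L/N_x, δz = T/N_z, x_i = -L/2 + i·δx for i = 1, …, N_x − 1, and z₁ = T − δz. Define the hat functions φ_i(x) = max(0, 1 − |x − x_i|/δx) and χ₁(z) = max(0, 1 − |z − z₁|/δz). Then for every (α_1, …, α_{N_x−1}) ∈ ℝ^{N_x−1} not all zero, the function f(x,z) = (Σ_{i=1}^{N_x−1} α_i φ_i(x)) χ₁(z) satisfies ∫_1^Λ |T_f(v,λ)|² λ⁴ (λ² − 1)^{-1/2} dλ > 0. In particular, the span of the functions (x,z) ↦ φ_i(x)χ₁(z), i = 1,…,N_x−1, is an (N_x−1)-dimensional subspace on which the truncated Michell wave resistance is positive definite. -/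

import Mathlib

open MeasureTheory Complex Set

/-- Michell-type transform of a function `f` on the rectangle `Ω`. -/
noncomputable def michellTransform (L T v lam : ℝ) (f : ℝ × ℝ → ℝ) : ℂ :=
  ∫ p in (Ioo (-L/2) (L/2)) ×ˢ (Ioo (0:ℝ) T),
    (f p : ℂ) * Complex.exp (-(lam^2 * v * p.2 : ℝ)) *
      Complex.exp (-(Complex.I * lam * v * p.1))

/-- The one-dimensional hat (tent) function centered at `c` with half-width `δ`. -/
noncomputable def hatFn (c δ x : ℝ) : ℝ := max 0 (1 - |x - c| / δ)

/-!
The transform factorises as `T_f(v, λ) = X(λ v) · Z(λ)`, where `Z(λ) = ∫ χ₁(z) e^{-λ² v z} dz > 0`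
and, the tent function `φ` centred at `c` having Fourier transform
`2 (1 - cos ξδ) / (δ ξ²) · e^{-iξc}`,
`X(ξ) = 2 (1 - cos ξδ) / (δ ξ²) · e^{iξ(L/2 - δ)} · P(e^{-iξδ})` with `P(w) = ∑ αᵢ wⁱ` a nonzero
polynomial. So `T_f(v, ·)` vanishes only on a countable set and the nonnegative integrand is
positive almost everywhere on `(1, Λ)`. It is integrable there because `T_f(v, ·)` is continuous
and `λ / √(λ² - 1)` is the derivative of `√(λ² - 1)`.
-/

@[fun_prop]
lemma continuous_hatFn (c δ : ℝ) : Continuous (hatFn c δ) := by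
  unfold hatFn; fun_prop

lemma hatFn_self (c δ : ℝ) : hatFn c δ c = 1 := by
  simp [hatFn]

lemma hatFn_eq_zero_of_le_abs {c δ x : ℝ} (hδ : 0 < δ) (h : δ ≤ |x - c|) : hatFn c δ x = 0 :=
  max_eq_left (by linarith [(one_le_div hδ).mpr h])

lemma hatFn_of_mem_Icc_left {c δ x : ℝ} (hδ : 0 < δ) (hx : x ∈ Icc (c - δ) c) :
    hatFn c δ x = (1 - c / δ) + 1 / δ * x := by
  have : |x - c| / δ ≤ 1 := by
    rw [div_le_one hδ, abs_of_nonpos (by linarith [hx.2])]; linarith [hx.1]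
  rw [hatFn, max_eq_right (by linarith), abs_of_nonpos (by linarith [hx.2])]
  field_simp
  ring

lemma hatFn_of_mem_Icc_right {c δ x : ℝ} (hδ : 0 < δ) (hx : x ∈ Icc c (c + δ)) :
    hatFn c δ x = (1 + c / δ) + -1 / δ * x := by
  have : |x - c| / δ ≤ 1 := by
    rw [div_le_one hδ, abs_of_nonneg (by linarith [hx.1])]; linarith [hx.2]
  rw [hatFn, max_eq_right (by linarith), abs_of_nonneg (by linarith [hx.1])]
  field_simp
  ring

lemma hasDerivAt_cexp_mul_affine {ξ : ℝ} (hξ : ξ ≠ 0) (k s x : ℝ) :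
    HasDerivAt (fun y : ℝ => cexp (-(I * ξ * y)) * (I / ξ * ↑(k + s * y) + s / ξ ^ 2))
      (↑(k + s * x) * cexp (-(I * ξ * x))) x := by
  have hlin : HasDerivAt (fun y : ℝ => (y : ℂ)) 1 x := ofRealCLM.hasDerivAt
  have hphase : HasDerivAt (fun y : ℝ => -(I * ξ * y)) (-(I * ξ)) x := by
    simpa using hlin.const_mul (-(I * ξ))
  have haffine : HasDerivAt (fun y : ℝ => I / ξ * ↑(k + s * y) + s / ξ ^ 2) (I / ξ * s) x := by
    simpa using ((hlin.const_mul (s : ℂ)).const_add (k : ℂ)).const_mul (I / ξ) |>.add_const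
      ((s : ℂ) / ξ ^ 2)
  refine (hphase.cexp.mul haffine).congr_deriv ?_
  have : (ξ : ℂ) ≠ 0 := ofReal_ne_zero.mpr hξ
  push_cast
  field_simp
  ring_nf
  simp only [I_sq]
  ring

lemma integral_affine_mul_cexp {ξ : ℝ} (hξ : ξ ≠ 0) (k s a b : ℝ) :
    ∫ x in a..b, (↑(k + s * x) : ℂ) * cexp (-(I * ξ * x)) =
      cexp (-(I * ξ * b)) * (I / ξ * ↑(k + s * b) + s / ξ ^ 2) -
        cexp (-(I * ξ * a)) * (I / ξ * ↑(k + s * a) + s / ξ ^ 2) :=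
  intervalIntegral.integral_eq_sub_of_hasDerivAt (fun x _ => hasDerivAt_cexp_mul_affine hξ k s x)
    (Continuous.intervalIntegrable (by fun_prop) _ _)

lemma integral_hatFn_mul_cexp {c δ ξ : ℝ} (hδ : 0 < δ) (hξ : ξ ≠ 0) :
    ∫ x in (c - δ)..(c + δ), (hatFn c δ x : ℂ) * cexp (-(I * ξ * x)) =
      (((2 - 2 * Real.cos (ξ * δ)) / (δ * ξ ^ 2) : ℝ) : ℂ) * cexp (-(I * ξ * c)) := by
  have hcont : Continuous fun x : ℝ => (hatFn c δ x : ℂ) * cexp (-(I * ξ * x)) := by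
    fun_prop
  have hleft : ∫ x in (c - δ)..c, (hatFn c δ x : ℂ) * cexp (-(I * ξ * x)) =
      ∫ x in (c - δ)..c, (↑((1 - c / δ) + 1 / δ * x) : ℂ) * cexp (-(I * ξ * x)) := by
    refine intervalIntegral.integral_congr fun x hx => ?_
    rw [uIcc_of_le (by linarith)] at hx
    simp only [hatFn_of_mem_Icc_left hδ hx]
  have hright : ∫ x in c..(c + δ), (hatFn c δ x : ℂ) * cexp (-(I * ξ * x)) =
      ∫ x in c..(c + δ), (↑((1 + c / δ) + -1 / δ * x) : ℂ) * cexp (-(I * ξ * x)) := by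
    refine intervalIntegral.integral_congr fun x hx => ?_
    rw [uIcc_of_le (by linarith)] at hx
    simp only [hatFn_of_mem_Icc_right hδ hx]
  rw [← intervalIntegral.integral_add_adjacent_intervals (b := c) (hcont.intervalIntegrable _ _)
    (hcont.intervalIntegrable _ _), hleft, hright, integral_affine_mul_cexp hξ,
    integral_affine_mul_cexp hξ]
  have hδ' : (δ : ℂ) ≠ 0 := ofReal_ne_zero.mpr hδ.ne'
  have hξ' : (ξ : ℂ) ≠ 0 := ofReal_ne_zero.mpr hξ
  have hminus : cexp (-(I * ξ * (c - δ))) = cexp (-(I * ξ * c)) * cexp (ξ * δ * I) := by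
    rw [← Complex.exp_add]; ring_nf
  have hplus : cexp (-(I * ξ * (c + δ))) = cexp (-(I * ξ * c)) * cexp (-(ξ * δ) * I) := by
    rw [← Complex.exp_add]; ring_nf
  push_cast
  rw [hminus, hplus, two_cos]
  field_simp
  ring

lemma setIntegral_hatFn_mul_cexp {A B c δ ξ : ℝ} (hδ : 0 < δ) (hξ : ξ ≠ 0) (hA : A ≤ c - δ)
    (hB : c + δ ≤ B) :
    ∫ x in Ioo A B, (hatFn c δ x : ℂ) * cexp (-(I * ξ * x)) =
      (((2 - 2 * Real.cos (ξ * δ)) / (δ * ξ ^ 2) : ℝ) : ℂ) * cexp (-(I * ξ * c)) := by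
  have hvanish : ∀ x ∈ Ioo A B \ Ioo (c - δ) (c + δ),
      (hatFn c δ x : ℂ) * cexp (-(I * ξ * x)) = 0 := by
    rintro x ⟨-, hx⟩
    have : δ ≤ |x - c| := by
      rw [mem_Ioo, not_and_or, not_lt, not_lt] at hx
      rcases hx with hx | hx
      · rw [abs_of_nonpos (by linarith)]; linarith
      · rw [abs_of_nonneg (by linarith)]; linarith
    simp [hatFn_eq_zero_of_le_abs hδ this]
  rw [setIntegral_eq_of_subset_of_forall_sdiff_eq_zero measurableSet_Ioo
    (Ioo_subset_Ioo hA hB) hvanish, ← integral_Ioc_eq_integral_Ioo,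
    ← intervalIntegral.integral_of_le (by linarith), integral_hatFn_mul_cexp hδ hξ]

lemma setIntegral_sum_hatFn_mul_cexp {n : ℕ} (α c : Fin n → ℝ) {A B δ ξ : ℝ} (hδ : 0 < δ)
    (hξ : ξ ≠ 0) (hc : ∀ i, A ≤ c i - δ ∧ c i + δ ≤ B) :
    ∫ x in Ioo A B, ((∑ i, α i * hatFn (c i) δ x : ℝ) : ℂ) * cexp (-(I * ξ * x)) =
      (((2 - 2 * Real.cos (ξ * δ)) / (δ * ξ ^ 2) : ℝ) : ℂ) *
        ∑ i, (α i : ℂ) * cexp (-(I * ξ * c i)) := by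
  push_cast
  simp_rw [Finset.sum_mul]
  rw [integral_finsetSum _ fun i _ => ?_, Finset.mul_sum]
  · refine Finset.sum_congr rfl fun i _ => ?_
    simp only [mul_assoc (α i : ℂ)]
    rw [integral_const_mul, setIntegral_hatFn_mul_cexp hδ hξ (hc i).1 (hc i).2]
    push_cast
    ring
  · exact (Continuous.integrableOn_Icc (by fun_prop)).mono_set Ioo_subset_Icc_self

lemma countable_setOf_cexp_mul_I_eq {a : ℝ} (ha : a ≠ 0) (r : ℂ) :
    {x : ℝ | cexp (a * x * I) = r}.Countable := by
  rcases eq_empty_or_nonempty {x : ℝ | cexp (a * x * I) = r} with h | ⟨x₀, hx₀⟩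
  · simp [h]
  refine (countable_range fun n : ℤ => x₀ + n * (2 * Real.pi) / a).mono fun x hx => ?_
  obtain ⟨n, hn⟩ := Complex.exp_eq_exp_iff_exists_int.mp (Eq.trans hx hx₀.symm)
  have hre : a * x = a * x₀ + n * (2 * Real.pi) := by
    simpa using congrArg Complex.im hn
  exact ⟨n, by field_simp; linarith⟩

lemma countable_setOf_sum_mul_cexp_pow_eq_zero {n : ℕ} {α : Fin n → ℂ} (hα : α ≠ 0) {a : ℝ}
    (ha : a ≠ 0) : {x : ℝ | ∑ i, α i * cexp (a * x * I) ^ (i : ℕ) = 0}.Countable := by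
  classical
  set q := Polynomial.ofFn n α
  have hq : q ≠ 0 := by
    simpa [Polynomial.ofFn_zero] using (Polynomial.injective_ofFn n).ne hα
  have heval (w : ℂ) : q.eval w = ∑ i, α i * w ^ (i : ℕ) := by
    simp [q, Polynomial.ofFn_eq_sum_monomial, Polynomial.eval_finsetSum]
  refine ((Polynomial.finite_setOfPred_isRoot hq).countable.biUnion
    fun r _ => countable_setOf_cexp_mul_I_eq ha r).mono fun x hx => ?_
  exact mem_biUnion (x := cexp (a * x * I)) (by simpa [heval] using hx) rfl

lemma countable_setOf_cos_mul_eq_one {a : ℝ} (ha : a ≠ 0) :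
    {x : ℝ | Real.cos (x * a) = 1}.Countable := by
  refine (countable_range fun n : ℤ => n * (2 * Real.pi) / a).mono fun x hx => ?_
  obtain ⟨n, hn⟩ := (Real.cos_eq_one_iff _).mp hx
  exact ⟨n, by field_simp; linarith⟩

noncomputable def hatProfile {n : ℕ} (α : Fin n → ℝ) (L δ x : ℝ) : ℝ :=
  ∑ i : Fin n, α i * hatFn (-L/2 + ((i : ℕ) + 1) * δ) δ x

lemma countable_setOf_setIntegral_hatProfile_eq_zero {n : ℕ} {α : Fin n → ℝ} (hα : α ≠ 0)
    {L δ : ℝ} (hδ : 0 < δ) (hnL : (n + 1) * δ ≤ L) :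
    {ξ : ℝ | ∫ x in Ioo (-L/2) (L/2),
      (hatProfile α L δ x : ℂ) * cexp (-(I * ξ * x)) = 0}.Countable := by
  have hα' : (fun i => (α i : ℂ)) ≠ 0 := fun h =>
    hα (funext fun i => by simpa using congrFun h i)
  refine (((countable_singleton 0).union (countable_setOf_cos_mul_eq_one hδ.ne')).union
    (countable_setOf_sum_mul_cexp_pow_eq_zero hα' (neg_ne_zero.2 hδ.ne'))).mono fun ξ hξ => ?_
  by_contra hout
  simp only [mem_union, mem_singleton_iff, mem_ofPred_eq, not_or] at hout
  obtain ⟨⟨hξ0, hcos⟩, hsum⟩ := hout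
  have hc (i : Fin n) :
      -L/2 ≤ (-L/2 + ((i : ℕ) + 1) * δ) - δ ∧ (-L/2 + ((i : ℕ) + 1) * δ) + δ ≤ L/2 := by
    have : ((i : ℕ) : ℝ) + 1 ≤ n := by exact_mod_cast i.isLt
    constructor <;> nlinarith
  have hfactor : ∑ i : Fin n, (α i : ℂ) * cexp (-(I * ξ * ↑(-L/2 + ((i : ℕ) + 1) * δ))) =
      cexp (I * ξ * ↑(L/2 - δ)) * ∑ i : Fin n, (α i : ℂ) * cexp (↑(-δ) * ξ * I) ^ (i : ℕ) := by
    rw [Finset.mul_sum]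
    refine Finset.sum_congr rfl fun i _ => ?_
    rw [← Complex.exp_nat_mul, mul_left_comm, ← Complex.exp_add]
    push_cast
    ring_nf
  unfold hatProfile at hξ
  rw [mem_ofPred_eq, setIntegral_sum_hatFn_mul_cexp α _ hδ hξ0 hc, hfactor] at hξ
  have hhat : (2 - 2 * Real.cos (ξ * δ)) / (δ * ξ ^ 2) ≠ 0 :=
    div_ne_zero (fun h => hcos (by linarith)) (by positivity)
  exact mul_ne_zero (ofReal_ne_zero.2 hhat) (mul_ne_zero (exp_ne_zero _) hsum) hξ

lemma michellTransform_mul (L T v lam : ℝ) (g h : ℝ → ℝ) :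
    michellTransform L T v lam (fun p => g p.1 * h p.2) =
      (∫ x in Ioo (-L/2) (L/2), (g x : ℂ) * cexp (-(I * ↑(lam * v) * x))) *
        ((∫ z in Ioo 0 T, h z * Real.exp (-(lam ^ 2 * v * z)) : ℝ) : ℂ) := by
  rw [michellTransform, Measure.volume_eq_prod, ← integral_complex_ofReal, ← setIntegral_prod_mul]
  congr 1
  ext p
  push_cast
  ring_nf

lemma setIntegral_Ioo_pos_of_continuous {g : ℝ → ℝ} {a b c : ℝ} (hab : a < b)
    (hg : Continuous g) (hg0 : 0 ≤ g) (hc : c ∈ Icc a b) (hgc : g c ≠ 0) :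
    0 < ∫ x in Ioo a b, g x := by
  rw [setIntegral_pos_iff_support_of_nonneg_ae (ae_of_all _ hg0)
    (hg.integrableOn_Icc.mono_set Ioo_subset_Icc_self)]
  have hmeets : (Function.support g ∩ Ioo a b).Nonempty :=
    mem_closure_iff.1 (by rwa [closure_Ioo hab.ne]) _ hg.isOpen_support hgc
  exact (hg.isOpen_support.inter isOpen_Ioo).measure_pos volume hmeets

lemma continuous_michellTransform {L T v : ℝ} (hv : 0 ≤ v) {f : ℝ × ℝ → ℝ}
    (hf : IntegrableOn f (Ioo (-L/2) (L/2) ×ˢ Ioo 0 T)) :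
    Continuous fun lam => michellTransform L T v lam f := by
  refine continuous_of_dominated (bound := fun p => ‖f p‖) (fun lam => ?_) (fun lam => ?_)
    hf.norm (ae_of_all _ fun p => by fun_prop)
  · exact ((continuous_ofReal.comp_aestronglyMeasurable hf.1).mul
      (Continuous.aestronglyMeasurable (by fun_prop))).mul
      (Continuous.aestronglyMeasurable (by fun_prop))
  · filter_upwards [ae_restrict_mem (measurableSet_Ioo.prod measurableSet_Ioo)] with p hp
    have hdamp : ‖cexp (-((lam ^ 2 * v * p.2 : ℝ) : ℂ))‖ ≤ 1 := by
      rw [norm_exp, ← ofReal_neg, ofReal_re, Real.exp_le_one_iff, neg_nonpos]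
      have := hp.2.1
      positivity
    have hphase : ‖cexp (-(I * lam * v * p.1))‖ = 1 := by
      rw [norm_exp]; simp
    rw [norm_mul, norm_mul, hphase, mul_one, norm_real]
    exact mul_le_of_le_one_right (norm_nonneg _) hdamp

lemma integrableOn_div_sqrt_sq_sub_one (Λ : ℝ) :
    IntegrableOn (fun x : ℝ => x / √(x ^ 2 - 1)) (Ioo 1 Λ) := by
  refine (intervalIntegral.integrableOn_deriv_of_nonneg (g := fun x => √(x ^ 2 - 1))
    (by fun_prop) (fun x hx => ?_) (fun x hx => ?_)).mono_set Ioo_subset_Ioc_self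
  · have hx2 : x ^ 2 - 1 ≠ 0 := by nlinarith [hx.1]
    convert ((hasDerivAt_pow 2 x).sub_const 1).sqrt hx2 using 1
    field_simp
    ring
  · have := hx.1
    positivity

lemma integral_norm_sq_mul_pow_four_div_sqrt_pos {F : ℝ → ℂ} {Λ : ℝ} (hΛ : 1 < Λ)
    (hF : Continuous F) (hF0 : {x | F x = 0}.Countable) :
    0 < ∫ x in Ioo 1 Λ, ‖F x‖ ^ 2 * x ^ 4 / √(x ^ 2 - 1) := by
  have hint : IntegrableOn (fun x => ‖F x‖ ^ 2 * x ^ 4 / √(x ^ 2 - 1)) (Ioo 1 Λ) :=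
    ((integrableOn_div_sqrt_sq_sub_one Λ).continuousOn_mul_of_subset
      (g := fun x => ‖F x‖ ^ 2 * x ^ 3) (by fun_prop) isCompact_Icc measurableSet_Ioo
      Ioo_subset_Icc_self).congr_fun (fun x _ => by ring) measurableSet_Ioo
  rw [setIntegral_pos_iff_support_of_nonneg_ae
    (ae_of_all _ fun x => by simp only [Pi.zero_apply]; positivity) hint]
  calc (0 : ENNReal) < volume (Ioo 1 Λ \ {x | F x = 0}) := by
        rw [measure_sdiff_null (hF0.measure_zero _), Real.volume_Ioo]
        simpa using hΛ
    _ ≤ _ := measure_mono fun x ⟨hx, hFx⟩ => by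
        have := hx.1
        have hFx' : 0 < ‖F x‖ := norm_pos_iff.2 hFx
        have hsqrt : 0 < √(x ^ 2 - 1) := Real.sqrt_pos.2 (by nlinarith)
        exact ⟨(div_pos (by positivity) hsqrt).ne', hx⟩

theorem stmt16 (L T v Λ : ℝ) (hL : 0 < L) (hT : 0 < T) (hv : 0 < v) (hΛ : 1 < Λ)
    (Nx Nz : ℕ) (hNx : 2 ≤ Nx) (hNz : 2 ≤ Nz)
    (α : Fin (Nx - 1) → ℝ) (hα : α ≠ 0) :
    0 < ∫ lam in Ioo (1:ℝ) Λ,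
        ‖michellTransform L T v lam
          (fun p =>
            (∑ i : Fin (Nx - 1),
              α i * hatFn (-L/2 + ((i : ℕ) + 1) * (L / Nx)) (L / Nx) p.1) *
            hatFn (T - T / Nz) (T / Nz) p.2)‖ ^ 2 *
          lam ^ 4 / Real.sqrt (lam ^ 2 - 1) := by
  have hNx0 : (0 : ℝ) < Nx := by exact_mod_cast (by omega : 0 < Nx)
  have hgrid : (((Nx - 1 : ℕ) : ℝ) + 1) * (L / Nx) ≤ L := by
    rw [Nat.cast_sub (by omega), Nat.cast_one, sub_add_cancel, mul_div_cancel₀ _ hNx0.ne']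
  have hcenter : T - T / Nz ∈ Icc 0 T :=
    ⟨sub_nonneg.2 (div_le_self hT.le (by exact_mod_cast (by omega : 1 ≤ Nz))),
      sub_le_self _ (by positivity)⟩
  refine integral_norm_sq_mul_pow_four_div_sqrt_pos hΛ (continuous_michellTransform hv.le
    ((ContinuousOn.integrableOn_compact (isCompact_Icc.prod isCompact_Icc)
      (by fun_prop)).mono_set (prod_mono Ioo_subset_Icc_self Ioo_subset_Icc_self))) ?_
  refine ((countable_setOf_setIntegral_hatProfile_eq_zero hα (div_pos hL hNx0) hgrid).preimage
    (mul_left_injective₀ hv.ne')).mono fun lam hlam => ?_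
  have hfactor := (michellTransform_mul L T v lam (hatProfile α L (L / Nx)) _).symm.trans hlam
  have hdepth : 0 < ∫ z in Ioo 0 T, hatFn (T - T / Nz) (T / Nz) z * Real.exp (-(lam ^ 2 * v * z)) :=
    setIntegral_Ioo_pos_of_continuous hT (by fun_prop)
      (fun z => mul_nonneg (le_max_left _ _) (Real.exp_pos _).le) hcenter (by simp [hatFn_self])
  exact (mul_eq_zero.1 hfactor).resolve_right (ofReal_ne_zero.2 hdepth.ne')
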